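/- Let σ be continuously differentiable and positive, S continuous, G(S) < ∞, f_S the invariant density, and F : ℝ → ℝ continuous with ∫_ℝ |F| f_S < ∞. Put ϑ = ∫_ℝ F f_S and define H_S(y) = ∫_0^y 2 (σ(x)² f_S(x))^{-1} (∫_{-∞}^x (F(v) − ϑ) f_S(v) dv) dx. Then H_S is twice continuously differentiable, it satisfies the Poisson equation S(y) H_S'(y) + (1/2) σ(y)² H_S''(y) = F(y) − ϑ for all y, and σ(y) H_S'(y) = 2 M_S(y)/(σ(y) f_S(y)) where M_S(y) = ∫_{-∞}^y (F(v) − ϑ) f_S(v) dv. -/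

import Mathlib

/-!
Put `w = σ² f_S`. The formula for `f_S` reads `w = G(S)⁻¹ exp (2 ∫₀ˣ S/σ²)`, so `w' = 2 S f_S`
(zero probability flux). By the fundamental theorem of calculus `M_S' = (F - ϑ) f_S` and
`H_S' = 2 M_S / w`, so the quotient rule gives `½ σ² H_S'' = (F - ϑ) - S H_S'`; and since `w` and
`M_S` are `C¹` with `w > 0`, `H_S'` is `C¹` as well.
-/

open MeasureTheory Real Set Filter intervalIntegral

theorem hasDerivAt_integral_Iic {E : Type*} [NormedAddCommGroup E] [NormedSpace ℝ E]
    [CompleteSpace E] {f : ℝ → E} (hf : Continuous f) (hfi : Integrable f) (y : ℝ) :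
    HasDerivAt (fun x => ∫ v in Iic x, f v) (f y) y := by
  have hsplit :
      (fun x => ∫ v in Iic x, f v) = fun x => (∫ v in Iic 0, f v) + ∫ v in 0..x, f v := by
    funext x
    rw [← integral_Iic_sub_Iic hfi.integrableOn hfi.integrableOn, add_sub_cancel]
  rw [hsplit]
  exact (hf.integral_hasStrictDerivAt 0 y).hasDerivAt.const_add _

theorem contDiff_succ_of_hasDerivAt {f f' : ℝ → ℝ} {n : ℕ} (hf : ∀ x, HasDerivAt f (f' x) x)
    (hf' : ContDiff ℝ n f') : ContDiff ℝ (n + 1) f := by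
  have hderiv : deriv f = f' := funext fun x => (hf x).deriv
  exact contDiff_succ_iff_deriv.2
    ⟨fun x => (hf x).differentiableAt, by simp, by rwa [hderiv]⟩

theorem integrable_sub_const_mul {α : Type*} [MeasurableSpace α] {μ : Measure α} {F ρ : α → ℝ}
    (hF : AEStronglyMeasurable F μ) (hρ : Integrable ρ μ) (hρ0 : ∀ x, 0 ≤ ρ x)
    (hFρ : Integrable (fun x => |F x| * ρ x) μ) (c : ℝ) :
    Integrable (fun x => (F x - c) * ρ x) μ := by
  have hmul : Integrable (fun x => F x * ρ x) μ :=
    hFρ.mono' (hF.mul hρ.aestronglyMeasurable) (Eventually.of_forall fun x => by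
      rw [norm_eq_abs, abs_mul, abs_of_nonneg (hρ0 x)])
  refine (hmul.sub (hρ.const_mul c)).congr (Eventually.of_forall fun x => ?_)
  simp only [Pi.sub_apply, sub_mul]

theorem poisson_eq_of_zero_flux {a S ρ M : ℝ → ℝ} {m y : ℝ}
    (hw : HasDerivAt (fun x => a x * ρ x) (2 * S y * ρ y) y) (hM : HasDerivAt M (m * ρ y) y)
    (ha : a y ≠ 0) (hρ : ρ y ≠ 0) :
    S y * (2 * (a y * ρ y)⁻¹ * M y)
      + 1 / 2 * a y * deriv (fun x => 2 * (a x * ρ x)⁻¹ * M x) y = m := by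
  have hderiv : HasDerivAt (fun x => 2 * (a x * ρ x)⁻¹ * M x)
      (2 * (-(2 * S y * ρ y) / (a y * ρ y) ^ 2) * M y + 2 * (a y * ρ y)⁻¹ * (m * ρ y)) y :=
    ((hw.inv (mul_ne_zero ha hρ)).const_mul 2).mul hM
  rw [hderiv.deriv]
  field_simp
  ring

/-- Half the speed density of the diffusion `dX = S(X) dt + σ(X) dW`. -/
noncomputable def speedDensity (σ S : ℝ → ℝ) (x : ℝ) : ℝ :=
  ((σ x) ^ 2)⁻¹ * exp (2 * ∫ v in (0:ℝ)..x, S v / (σ v) ^ 2)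

noncomputable def invariantDensity (σ S : ℝ → ℝ) (x : ℝ) : ℝ :=
  (∫ y, speedDensity σ S y)⁻¹ * speedDensity σ S x

section Densities

variable {σ S : ℝ → ℝ}

theorem speedDensity_pos (hσ : ∀ x, σ x ≠ 0) (x : ℝ) : 0 < speedDensity σ S x := by
  have := hσ x
  unfold speedDensity
  positivity

theorem integral_speedDensity_pos (hσ : ∀ x, σ x ≠ 0) (hi : Integrable (speedDensity σ S)) :
    0 < ∫ y, speedDensity σ S y := by
  rw [integral_pos_iff_support_of_nonneg (fun x => (speedDensity_pos hσ x).le) hi,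
    Function.support_eq_univ fun x => (speedDensity_pos hσ x).ne']
  simp

theorem hasDerivAt_sq_mul_speedDensity (hσc : Continuous σ) (hσ : ∀ x, σ x ≠ 0)
    (hS : Continuous S) (y : ℝ) :
    HasDerivAt (fun x => σ x ^ 2 * speedDensity σ S x) (2 * S y * speedDensity σ S y) y := by
  have hcancel : ∀ x, σ x ^ 2 * speedDensity σ S x = exp (2 * ∫ v in (0:ℝ)..x, S v / σ v ^ 2) :=
    fun x => mul_inv_cancel_left₀ (pow_ne_zero 2 (hσ x)) _
  have hq : Continuous fun v => S v / σ v ^ 2 := hS.div (hσc.pow 2) fun x => pow_ne_zero 2 (hσ x)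
  simp only [hcancel]
  refine ((hq.integral_hasStrictDerivAt 0 y).hasDerivAt.const_mul 2).exp.congr_deriv ?_
  rw [← hcancel]
  have := hσ y
  field_simp

theorem continuous_speedDensity (hσc : Continuous σ) (hσ : ∀ x, σ x ≠ 0) (hS : Continuous S) :
    Continuous (speedDensity σ S) := by
  have hq : Continuous fun v => S v / σ v ^ 2 := hS.div (hσc.pow 2) fun x => pow_ne_zero 2 (hσ x)
  have hprim : Continuous fun x => ∫ v in (0:ℝ)..x, S v / σ v ^ 2 :=
    continuous_primitive (fun _ _ => hq.intervalIntegrable _ _) 0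
  exact ((hσc.pow 2).inv₀ fun x => pow_ne_zero 2 (hσ x)).mul
    (continuous_exp.comp (continuous_const.mul hprim))

theorem invariantDensity_pos (hσ : ∀ x, σ x ≠ 0) (hi : Integrable (speedDensity σ S)) (x : ℝ) :
    0 < invariantDensity σ S x :=
  mul_pos (inv_pos.2 (integral_speedDensity_pos hσ hi)) (speedDensity_pos hσ x)

theorem hasDerivAt_sq_mul_invariantDensity (hσc : Continuous σ) (hσ : ∀ x, σ x ≠ 0)
    (hS : Continuous S) (y : ℝ) :
    HasDerivAt (fun x => σ x ^ 2 * invariantDensity σ S x)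
      (2 * S y * invariantDensity σ S y) y := by
  unfold invariantDensity
  exact ((hasDerivAt_sq_mul_speedDensity hσc hσ hS y).const_mul (∫ y, speedDensity σ S y)⁻¹
    |>.congr_deriv (by ring)).congr_of_eventuallyEq (Eventually.of_forall fun x => by ring)

end Densities

theorem moment_estimation_stmt2_general
    (σ S : ℝ → ℝ)
    (hσ1 : ContDiff ℝ 1 σ) (hσpos : ∀ x, 0 < σ x)
    (hSc : Continuous S)
    (hGfin : Integrable (fun y : ℝ =>
      ((σ y) ^ 2)⁻¹ * Real.exp (2 * ∫ v in (0:ℝ)..y, S v / (σ v) ^ 2)))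
    (fS : ℝ → ℝ)
    (hfS : ∀ x, fS x =
      (∫ y : ℝ, ((σ y) ^ 2)⁻¹ * Real.exp (2 * ∫ v in (0:ℝ)..y, S v / (σ v) ^ 2))⁻¹
        * ((σ x) ^ 2)⁻¹ * Real.exp (2 * ∫ v in (0:ℝ)..x, S v / (σ v) ^ 2))
    (F : ℝ → ℝ) (hFc : Continuous F)
    (hFint : Integrable (fun x => |F x| * fS x))
    (ϑ : ℝ)
    (M : ℝ → ℝ) (hM : ∀ y, M y = ∫ v in Set.Iic y, (F v - ϑ) * fS v)
    (H : ℝ → ℝ)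
    (hH : ∀ y, H y =
      ∫ x in (0:ℝ)..y, 2 * ((σ x) ^ 2 * fS x)⁻¹ * (∫ v in Set.Iic x, (F v - ϑ) * fS v)) :
    ContDiff ℝ 2 H ∧
      (∀ y : ℝ, S y * deriv H y + (1 / 2) * (σ y) ^ 2 * deriv (deriv H) y = F y - ϑ) ∧
      (∀ y : ℝ, σ y * deriv H y = 2 * M y / (σ y * fS y)) := by
  obtain rfl : fS = invariantDensity σ S := funext fun x => (hfS x).trans (mul_assoc _ _ _)
  have hσc := hσ1.continuous
  have hσ0 : ∀ x, σ x ≠ 0 := fun x => (hσpos x).ne'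
  have hρpos := invariantDensity_pos hσ0 hGfin
  have hρc : Continuous (invariantDensity σ S) :=
    continuous_const.mul (continuous_speedDensity hσc hσ0 hSc)
  have hgc : Continuous fun v => (F v - ϑ) * invariantDensity σ S v :=
    (hFc.sub continuous_const).mul hρc
  have hMd : ∀ y, HasDerivAt M ((F y - ϑ) * invariantDensity σ S y) y := funext hM ▸
    hasDerivAt_integral_Iic hgc (integrable_sub_const_mul hFc.aestronglyMeasurable
      (hGfin.const_mul _) (fun x => (hρpos x).le) hFint ϑ)
  have hw := hasDerivAt_sq_mul_invariantDensity hσc hσ0 hSc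
  set K := fun x => 2 * (σ x ^ 2 * invariantDensity σ S x)⁻¹ * M x
  have hwC : ContDiff ℝ 1 fun x => σ x ^ 2 * invariantDensity σ S x :=
    contDiff_succ_of_hasDerivAt (n := 0) hw (contDiff_zero.2 ((continuous_const.mul hSc).mul hρc))
  have hMC : ContDiff ℝ 1 M := contDiff_succ_of_hasDerivAt (n := 0) hMd (contDiff_zero.2 hgc)
  have hw0 : ∀ x, σ x ^ 2 * invariantDensity σ S x ≠ 0 :=
    fun x => mul_ne_zero (pow_ne_zero 2 (hσ0 x)) (hρpos x).ne'
  have hK : ContDiff ℝ 1 K := (contDiff_const.mul (hwC.inv hw0)).mul hMC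
  have hHd : ∀ y, HasDerivAt H (K y) y := by
    have hHK : H = fun y => ∫ x in (0:ℝ)..y, K x := funext fun y => by simp only [hH, K, hM]
    exact hHK ▸ fun y => (hK.continuous.integral_hasStrictDerivAt 0 y).hasDerivAt
  have hderiv : deriv H = K := funext fun y => (hHd y).deriv
  refine ⟨contDiff_succ_of_hasDerivAt (n := 1) hHd hK, fun y => ?_, fun y => ?_⟩
  · rw [hderiv]
    exact poisson_eq_of_zero_flux (hw y) (hMd y) (pow_ne_zero 2 (hσ0 y)) (hρpos y).ne'
  · simp only [hderiv, K]
    have := (hρpos y).ne'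
    have := hσ0 y
    field_simp

/-- With σ continuously differentiable and positive, S continuous, G(S) < ∞,
`fS` the invariant density, and `F` continuous with `∫ |F| fS < ∞`, put `ϑ = ∫ F fS` and
`H_S(y) = ∫_0^y 2 (σ(x)² fS(x))⁻¹ (∫_{-∞}^x (F - ϑ) fS) dx`.  Then `H_S` is twice continuously
differentiable, satisfies `S H_S' + (1/2) σ² H_S'' = F - ϑ`, and
`σ(y) H_S'(y) = 2 M_S(y) / (σ(y) fS(y))` where `M_S(y) = ∫_{-∞}^y (F - ϑ) fS`. -/
theorem moment_estimation_stmt2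
    (σ S : ℝ → ℝ)
    (hσ1 : ContDiff ℝ 1 σ) (hσpos : ∀ x, 0 < σ x)
    (hSc : Continuous S)
    (hGfin : Integrable (fun y : ℝ =>
      ((σ y) ^ 2)⁻¹ * Real.exp (2 * ∫ v in (0:ℝ)..y, S v / (σ v) ^ 2)))
    (fS : ℝ → ℝ)
    (hfS : ∀ x, fS x =
      (∫ y : ℝ, ((σ y) ^ 2)⁻¹ * Real.exp (2 * ∫ v in (0:ℝ)..y, S v / (σ v) ^ 2))⁻¹
        * ((σ x) ^ 2)⁻¹ * Real.exp (2 * ∫ v in (0:ℝ)..x, S v / (σ v) ^ 2))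
    (F : ℝ → ℝ) (hFc : Continuous F)
    (hFint : Integrable (fun x => |F x| * fS x))
    (ϑ : ℝ) (hϑ : ϑ = ∫ x : ℝ, F x * fS x)
    (M : ℝ → ℝ) (hM : ∀ y, M y = ∫ v in Set.Iic y, (F v - ϑ) * fS v)
    (H : ℝ → ℝ)
    (hH : ∀ y, H y =
      ∫ x in (0:ℝ)..y, 2 * ((σ x) ^ 2 * fS x)⁻¹ * (∫ v in Set.Iic x, (F v - ϑ) * fS v)) :
    ContDiff ℝ 2 H ∧
      (∀ y : ℝ, S y * deriv H y + (1 / 2) * (σ y) ^ 2 * deriv (deriv H) y = F y - ϑ) ∧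
      (∀ y : ℝ, σ y * deriv H y = 2 * M y / (σ y * fS y)) :=
  moment_estimation_stmt2_general σ S hσ1 hσpos hSc hGfin fS hfS F hFc hFint ϑ M hM H hH
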